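/- arXiv:2311.15388 — 2 statements merged into one kernel-verified Lean document; each statement's English description precedes it below -/
import Mathlib

section
/- The formal power series P(x) = Σ_{n≥0} p(n) xⁿ over ℤ satisfies (1 - x - x²)² · P(x) = x(1 - x + x³ - x⁴). -/
/-- `l` is a composition of `n`: a finite list of positive integers summing to `n`
(the empty list is the unique composition of `0`). -/
def IsComposition (n : ℕ) (l : List ℕ) : Prop :=
  (∀ x ∈ l, 0 < x) ∧ l.sum = n

/-- The Arndt condition: `σ_{2i-1} > σ_{2i}` (1-based) for every `i` with `2i ≤ ℓ`;
with 0-based indices, `l[2i] > l[2i+1]` whenever `2i+1 < l.length`. -/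
def IsArndt (l : List ℕ) : Prop :=
  ∀ i : ℕ, 2 * i + 1 < l.length → l.getD (2 * i + 1) 0 < l.getD (2 * i) 0

/-- `arndt n` is the number of Arndt compositions of `n`. -/
noncomputable def arndt (n : ℕ) : ℕ :=
  Set.ncard {l : List ℕ | IsComposition n l ∧ IsArndt l}

/-- `arndtParts n m` is the number of Arndt compositions of `n` with exactly `m` parts. -/
noncomputable def arndtParts (n m : ℕ) : ℕ :=
  Set.ncard {l : List ℕ | IsComposition n l ∧ IsArndt l ∧ l.length = m}

/-- The generalized binomial coefficient `C(a,b) = a(a-1)⋯(a-b+1)/b!` for an integer `a`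
and a natural number `b` (represented as a nonnegative integer); it is `0` for negative `b`. -/
def genChoose (a b : ℤ) : ℤ :=
  if 0 ≤ b then (∏ i ∈ Finset.range b.toNat, (a - (i : ℤ))) / (b.toNat.factorial : ℤ) else 0

/-- `totalParts n` is the total number of parts summed over all Arndt compositions of `n`. -/
noncomputable def totalParts (n : ℕ) : ℕ :=
  ∑ᶠ l ∈ {l : List ℕ | IsComposition n l ∧ IsArndt l}, l.length

/-!
An Arndt composition of `n ≥ 1` is either the single part `n` or a pair `a > b ≥ 1` followed by
an Arndt composition of `n - a - b`. The pairs are counted by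
`C(x) = x³ / ((1 - x) (1 - x²))`, so the number `F` of Arndt compositions and the number `P` of
their parts satisfy `F = 1 / (1 - x) + C F` and `P = x / (1 - x) + C (2 F + P)`, a pair adding two
parts to each composition it heads. Solving, `(1 - x - x²) F = 1 - x²` and
`(1 - x - x²) P = x - x³ + 2 x³ F`, which combine to the identity.
-/

open Finset PowerSeries

theorem isComposition_nil_iff {n : ℕ} : IsComposition n [] ↔ n = 0 := by
  simp [IsComposition, eq_comm]

theorem isComposition_cons_iff {n a : ℕ} {l : List ℕ} :
    IsComposition n (a :: l) ↔ 0 < a ∧ a ≤ n ∧ IsComposition (n - a) l := by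
  simp only [IsComposition, List.mem_cons, forall_eq_or_imp, List.sum_cons]
  constructor
  · rintro ⟨⟨ha, hl⟩, hsum⟩
    exact ⟨ha, by omega, hl, by omega⟩
  · rintro ⟨ha, han, hl, hsum⟩
    exact ⟨⟨ha, hl⟩, by omega⟩

theorem isArndt_nil : IsArndt [] := by
  simp [IsArndt]

theorem isArndt_singleton (a : ℕ) : IsArndt [a] := by
  simp [IsArndt]

theorem isArndt_cons_cons {a b : ℕ} {t : List ℕ} :
    IsArndt (a :: b :: t) ↔ b < a ∧ IsArndt t := by
  have shift (i : ℕ) : 2 * (i + 1) = 2 * i + 1 + 1 := by ring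
  constructor
  · intro h
    refine ⟨by simpa using h 0 (by simp), fun i hi => ?_⟩
    simpa [shift] using h (i + 1) (by simp only [List.length_cons]; omega)
  · rintro ⟨hba, ht⟩ (_ | i) hi
    · simpa using hba
    · simpa [shift] using ht i (by simp only [List.length_cons] at hi; omega)

open Classical in
noncomputable def arndtCompositions (n : ℕ) : Finset (List ℕ) :=
  {l ∈ univ.image (Composition.blocks (n := n)) | IsArndt l}

theorem mem_arndtCompositions {n : ℕ} {l : List ℕ} :
    l ∈ arndtCompositions n ↔ IsComposition n l ∧ IsArndt l := by
  simp only [arndtCompositions, mem_filter, mem_image, mem_univ, true_and, IsComposition]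
  refine and_congr_left fun _ => ⟨?_, fun ⟨hpos, hsum⟩ => ⟨⟨l, hpos _, hsum⟩, rfl⟩⟩
  rintro ⟨c, rfl⟩
  exact ⟨fun _ => c.blocks_pos, c.blocks_sum⟩

theorem totalParts_eq_sum (n : ℕ) : totalParts n = ∑ l ∈ arndtCompositions n, l.length := by
  have : {l : List ℕ | IsComposition n l ∧ IsArndt l} = ↑(arndtCompositions n) := by
    ext l
    simp [mem_arndtCompositions]
  rw [totalParts, this, finsum_mem_coe_finset]

theorem arndtCompositions_zero : arndtCompositions 0 = {[]} := by
  ext (_ | ⟨a, l⟩)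
  · simp [mem_arndtCompositions, isComposition_nil_iff, isArndt_nil]
  · simp [mem_arndtCompositions, isComposition_cons_iff]
    omega

theorem arndtCompositions_succ (n : ℕ) :
    arndtCompositions (n + 1) = insert [n + 1]
      ((Icc 1 (n + 1)).biUnion fun b => (Icc (b + 1) (n + 1 - b)).biUnion fun a =>
        (arndtCompositions (n + 1 - a - b)).image (a :: b :: ·)) := by
  ext (_ | ⟨a, _ | ⟨b, t⟩⟩)
  · simp [mem_arndtCompositions, isComposition_nil_iff]
  · simp [mem_arndtCompositions, isComposition_cons_iff, isComposition_nil_iff, isArndt_singleton]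
    omega
  · simp [mem_arndtCompositions, isComposition_cons_iff, isArndt_cons_cons]
    constructor
    · rintro ⟨⟨ha, han, hb, hbn, ht⟩, hba, harndt⟩
      exact ⟨⟨hb, by omega⟩, ⟨hba, by omega⟩, ht, harndt⟩
    · rintro ⟨⟨hb, hbn⟩, ⟨hba, han⟩, ht, harndt⟩
      exact ⟨⟨by omega, by omega, hb, by omega, ht⟩, hba, harndt⟩

theorem sum_arndtCompositions_succ {M : Type*} [AddCommMonoid M] (w : List ℕ → M) (n : ℕ) :
    ∑ l ∈ arndtCompositions (n + 1), w l = w [n + 1] +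
      ∑ b ∈ Icc 1 (n + 1), ∑ a ∈ Icc (b + 1) (n + 1 - b),
        ∑ t ∈ arndtCompositions (n + 1 - a - b), w (a :: b :: t) := by
  rw [arndtCompositions_succ, sum_insert (by simp), sum_biUnion]
  · refine congrArg _ (sum_congr rfl fun b _ => ?_)
    rw [sum_biUnion]
    · exact sum_congr rfl fun a _ => sum_image fun _ _ _ _ => List.tail_eq_of_cons_eq ∘
        List.tail_eq_of_cons_eq
    · intro a₁ _ a₂ _ hne
      simp only [Function.onFun, disjoint_left, mem_image]
      rintro _ ⟨t₁, _, rfl⟩ ⟨t₂, _, h⟩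
      exact hne (List.head_eq_of_cons_eq h).symm
  · intro b₁ _ b₂ _ hne
    simp only [Function.onFun, disjoint_left, mem_biUnion, mem_image]
    rintro _ ⟨a₁, _, t₁, _, rfl⟩ ⟨a₂, _, t₂, _, h⟩
    exact hne (List.head_eq_of_cons_eq (List.tail_eq_of_cons_eq h)).symm

theorem sum_Icc_Icc_add_eq_sum_range_nsmul {M : Type*} [AddCommMonoid M] (n : ℕ) (g : ℕ → M) :
    ∑ b ∈ Icc 1 n, ∑ a ∈ Icc (b + 1) (n - b), g (a + b) =
      ∑ k ∈ range (n + 1), ((k - 1) / 2) • g k := by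
  have shift : ∀ b ∈ Icc 1 n,
      ∑ a ∈ Icc (b + 1) (n - b), g (a + b) = ∑ k ∈ Icc (2 * b + 1) n, g k := by
    intro b hb
    rw [mem_Icc] at hb
    rw [show Icc (2 * b + 1) n = Icc (b + 1 + b) (n - b + b) by congr 1 <;> omega,
      ← map_add_right_Icc, sum_map]
    rfl
  rw [sum_congr rfl shift, sum_comm' (t' := range (n + 1)) (s' := fun k => Icc 1 ((k - 1) / 2))]
  · simp
  · intro b k
    simp only [mem_Icc, mem_range]
    omega

section Series

variable {R : Type*} [Semiring R]

noncomputable def arndtSeries (w : List ℕ → R) : R⟦X⟧ :=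
  mk fun n => ∑ l ∈ arndtCompositions n, w l

/-- `∑ x ^ (a + b)` over `a > b ≥ 1`: there are `⌊(k - 1) / 2⌋` such pairs with `a + b = k`. -/
noncomputable def pairSeries : R⟦X⟧ :=
  mk fun k => ((k - 1) / 2 : ℕ)

theorem arndtSeries_eq (w : List ℕ → R) (d : ℕ) (hw : ∀ a b t, w (a :: b :: t) = w t + d) :
    arndtSeries w = mk (fun n => if n = 0 then w [] else w [n]) +
      pairSeries * (d • arndtSeries 1 + arndtSeries w) := by
  ext (_ | n)
  · simp [arndtSeries, pairSeries, arndtCompositions_zero]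
  have step (m : ℕ) : ∑ t ∈ arndtCompositions m, (w t + d) =
      ∑ t ∈ arndtCompositions m, w t + #(arndtCompositions m) • (d : R) := by
    rw [sum_add_distrib, sum_const]
  rw [map_add, coeff_mul, Nat.sum_antidiagonal_eq_sum_range_succ_mk]
  simp only [arndtSeries, pairSeries, coeff_mk, map_add, map_nsmul, sum_arndtCompositions_succ, hw,
    step, Nat.add_one_ne_zero, if_false, Nat.sub_sub]
  rw [sum_Icc_Icc_add_eq_sum_range_nsmul (n + 1) fun k =>
    ∑ t ∈ arndtCompositions (n + 1 - k), w t + #(arndtCompositions (n + 1 - k)) • (d : R)]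
  refine congrArg _ (sum_congr rfl fun k _ => ?_)
  simp only [Pi.one_apply, sum_const, nsmul_eq_mul, mul_one]
  rw [add_comm (∑ t ∈ _, w t), Nat.cast_comm d]

theorem mk_ite_eq_zero_zero_one :
    mk (fun n => if n = 0 then 0 else 1) = (X : R⟦X⟧) * mk fun _ => 1 := by
  ext (_ | n) <;> simp [coeff_succ_X_mul]

end Series

theorem one_sub_X_sub_X_sq_add_X_cube_mul_pairSeries :
    (1 - X - X ^ 2 + X ^ 3) * (pairSeries : ℤ⟦X⟧) = X ^ 3 := by
  rw [show (1 - X - X ^ 2 + X ^ 3) * (pairSeries : ℤ⟦X⟧) =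
    pairSeries - X ^ 1 * pairSeries - X ^ 2 * pairSeries + X ^ 3 * pairSeries by ring]
  ext n
  simp only [map_add, map_sub, coeff_X_pow_mul', coeff_X_pow, pairSeries, coeff_mk]
  split_ifs <;> omega

/-- `(1 - x - x²)² · P(x) = x(1 - x + x³ - x⁴)` where `P(x) = Σ_{n≥0} p(n) xⁿ`. -/
theorem totalParts_gf :
    (1 - PowerSeries.X - PowerSeries.X ^ 2) ^ 2 *
        PowerSeries.mk (fun n => (totalParts n : ℤ)) =
      PowerSeries.X * (1 - PowerSeries.X + PowerSeries.X ^ 3 - PowerSeries.X ^ 4) := by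
  let E : ℤ⟦X⟧ := PowerSeries.mk fun _ => 1
  let F := arndtSeries (1 : List ℕ → ℤ)
  let P := arndtSeries fun l : List ℕ => (l.length : ℤ)
  have hE : E * (1 - X) = 1 := mk_one_mul_one_sub_eq_one ℤ
  have hC := one_sub_X_sub_X_sq_add_X_cube_mul_pairSeries
  have hF : F = E + pairSeries * F := by
    simpa using arndtSeries_eq (1 : List ℕ → ℤ) 0 (by simp)
  have hP : P = X * E + pairSeries * (2 * F + P) := by
    simpa [mk_ite_eq_zero_zero_one] using arndtSeries_eq (fun l : List ℕ => (l.length : ℤ)) 2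
      (fun _ _ _ => by push_cast [List.length_cons]; ring)
  have hF' : (1 - X - X ^ 2) * F = 1 - X ^ 2 := by
    linear_combination (1 - X - X ^ 2 + X ^ 3) * hF + F * hC + (1 - X ^ 2) * hE
  have hP' : (1 - X - X ^ 2) * P = X - X ^ 3 + 2 * X ^ 3 * F := by
    linear_combination (1 - X - X ^ 2 + X ^ 3) * hP + (2 * F + P) * hC + X * (1 - X ^ 2) * hE
  have hP_eq : PowerSeries.mk (fun n => (totalParts n : ℤ)) = P := by
    ext n
    simp [P, arndtSeries, totalParts_eq_sum]
  rw [hP_eq]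
  linear_combination (1 - X - X ^ 2) * hP' + 2 * X ^ 3 * hF'
end

section
/- For all integers n, m ≥ 0, the number of anti-palindromic compositions of n with exactly m parts equals 2^{⌊m/2⌋} times the number of Arndt compositions of n with exactly m parts: ap(n,m) = 2^{⌊m/2⌋} · a(n,m). Equivalently, the number of Arndt compositions of n with m parts equals the number of reduced anti-palindromic compositions (flip-equivalence classes of anti-palindromic compositions, each class having size 2^{⌊m/2⌋}) of n with m parts. -/
/-- A composition `σ = (σ₁, …, σ_ℓ)` is anti-palindromic if `σ_i ≠ σ_{ℓ+1-i}` whenever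
`i ≠ ℓ+1-i`; in 0-based indexing, `l[i] ≠ l[ℓ-1-i]` whenever `2i+1 ≠ ℓ`. -/
def IsAntiPalindromic (l : List ℕ) : Prop :=
  ∀ i : ℕ, i < l.length → 2 * i + 1 ≠ l.length →
    l.getD i 0 ≠ l.getD (l.length - 1 - i) 0

/-- `antiPalParts n m` is the number of anti-palindromic compositions of `n`
with exactly `m` parts. -/
noncomputable def antiPalParts (n m : ℕ) : ℕ :=
  Set.ncard {l : List ℕ | IsComposition n l ∧ IsAntiPalindromic l ∧ l.length = m}

/-!
`nest` places the entries of a list alternately at the front and at the back, working inwards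
(`nest [a, b, c, d] = [a, c, d, b]`). It is a bijection under which anti-palindromic compositions
correspond to compositions whose consecutive pairs `(σ₁, σ₂), (σ₃, σ₄), …` have distinct entries,
while the Arndt compositions are those whose pairs are strictly decreasing. Both families obey the
same recursion over the first pair, and a pair of distinct entries is a decreasing pair or its
swap, which contributes a factor `2` for each of the `⌊m/2⌋` pairs.
-/

open Finset

section ListPairs

variable {α : Type*}

def PairsSatisfy (r : α → α → Prop) : List α → Prop
  | [] => True
  | [_] => True
  | x :: y :: l => r x y ∧ PairsSatisfy r l

@[simp] theorem pairsSatisfy_nil (r : α → α → Prop) : PairsSatisfy r [] := trivial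

@[simp] theorem pairsSatisfy_singleton (r : α → α → Prop) (x : α) : PairsSatisfy r [x] := trivial

@[simp] theorem pairsSatisfy_cons_cons {r : α → α → Prop} {x y : α} {l : List α} :
    PairsSatisfy r (x :: y :: l) ↔ r x y ∧ PairsSatisfy r l := Iff.rfl

def nest : List α → List α
  | [] => []
  | [x] => [x]
  | x :: y :: l => x :: (nest l ++ [y])

theorem nest_perm : ∀ l : List α, (nest l).Perm l
  | [] => .refl _
  | [_] => .refl _
  | x :: y :: l => ((List.perm_append_singleton y _).trans ((nest_perm l).cons y)).cons x

theorem length_nest (l : List α) : (nest l).length = l.length := (nest_perm l).length_eq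

theorem nest_injective : Function.Injective (nest : List α → List α) := by
  intro l₁ l₂ h
  have hl := congrArg List.length h
  simp only [length_nest] at hl
  induction l₁ using nest.induct generalizing l₂ with
  | case3 x y l ih =>
    rcases l₂ with _ | ⟨x', _ | ⟨y', l'⟩⟩
    · simp at hl
    · simp at hl
    simp only [nest, List.cons.injEq, List.length_cons] at h hl ⊢
    obtain ⟨rfl, h⟩ := h
    obtain ⟨hnest, hy⟩ := List.append_inj' h rfl
    exact ⟨rfl, List.singleton_inj.mp hy, ih hnest (by omega)⟩
  | _ => rcases l₂ with _ | ⟨x', _ | ⟨y', l'⟩⟩ <;> simp_all [nest]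

theorem nest_surjective : Function.Surjective (nest : List α → List α) := by
  intro l
  induction h : l.length using Nat.strong_induction_on generalizing l with
  | _ k ih =>
  rcases l with _ | ⟨x, t⟩
  · exact ⟨[], rfl⟩
  rcases t.eq_nil_or_concat' with rfl | ⟨s, y, rfl⟩
  · exact ⟨[x], rfl⟩
  obtain ⟨s', rfl⟩ := ih s.length (by simp [← h]) s rfl
  exact ⟨x :: y :: s', rfl⟩

end ListPairs

theorem isArndt_cons_cons_s12 {x y : ℕ} {l : List ℕ} :
    IsArndt (x :: y :: l) ↔ y < x ∧ IsArndt l := by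
  rw [IsArndt, ← Nat.and_forall_add_one]
  have h (i : ℕ) : 2 * (i + 1) = 2 * i + 1 + 1 := by ring
  simp [h, IsArndt]

theorem isArndt_iff_pairsSatisfy : ∀ {l : List ℕ}, IsArndt l ↔ PairsSatisfy (fun x y => y < x) l
  | [] | [_] => by simp [IsArndt]
  | _ :: _ :: _ => by rw [isArndt_cons_cons_s12, isArndt_iff_pairsSatisfy, pairsSatisfy_cons_cons]

theorem isAntiPalindromic_cons_append_singleton {x y : ℕ} {l : List ℕ} :
    IsAntiPalindromic (x :: (l ++ [y])) ↔ x ≠ y ∧ IsAntiPalindromic l := by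
  have getD_inner (i : ℕ) (hi : i < l.length) : (x :: (l ++ [y])).getD (i + 1) 0 = l.getD i 0 := by
    rw [List.getD_cons_succ, List.getD_append _ _ _ _ hi]
  have getD_last : (x :: (l ++ [y])).getD (l.length + 1) 0 = y := by simp
  have hlen : (x :: (l ++ [y])).length = l.length + 2 := by simp
  rw [IsAntiPalindromic, IsAntiPalindromic, hlen]
  constructor
  · intro h
    refine ⟨fun hxy => ?_, fun i hi hodd => ?_⟩
    · have := h 0 (by omega) (by omega)
      rw [show l.length + 2 - 1 - 0 = l.length + 1 by omega, getD_last] at this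
      exact this (by simpa using hxy)
    · have := h (i + 1) (by omega) (by omega)
      rwa [show l.length + 2 - 1 - (i + 1) = l.length - 1 - i + 1 by omega,
        getD_inner _ hi, getD_inner _ (by omega)] at this
  · rintro ⟨hxy, h⟩ (_ | i) hi hodd
    · rw [show l.length + 2 - 1 - 0 = l.length + 1 by omega, getD_last]
      simpa using hxy
    rcases Nat.lt_or_ge i l.length with hil | hil
    · rw [show l.length + 2 - 1 - (i + 1) = l.length - 1 - i + 1 by omega,
        getD_inner _ hil, getD_inner _ (by omega)]
      exact h i hil (by omega)
    · obtain rfl : i = l.length := by omega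
      rw [show l.length + 2 - 1 - (l.length + 1) = 0 by omega, getD_last]
      simpa using hxy.symm

theorem isAntiPalindromic_nest_iff :
    ∀ {l : List ℕ}, IsAntiPalindromic (nest l) ↔ PairsSatisfy (· ≠ ·) l
  | [] | [_] => by
    simp only [nest, pairsSatisfy_nil, pairsSatisfy_singleton, iff_true]
    intro i hi hodd
    simp only [List.length_nil, List.length_singleton] at hi hodd
    omega
  | _ :: _ :: _ => by
    rw [nest, isAntiPalindromic_cons_append_singleton, isAntiPalindromic_nest_iff,
      pairsSatisfy_cons_cons]

theorem isComposition_nest_iff {n : ℕ} {l : List ℕ} :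
    IsComposition n (nest l) ↔ IsComposition n l := by
  simp only [IsComposition, (nest_perm l).mem_iff, (nest_perm l).sum_eq]

section Counting

variable (r : ℕ → ℕ → Prop) [DecidableRel r]

def headPairs (n : ℕ) : Finset (ℕ × ℕ) :=
  (Icc 1 n ×ˢ Icc 1 n).filter fun p => r p.1 p.2 ∧ p.1 + p.2 ≤ n

def pairedCompositions : ℕ → ℕ → Finset (List ℕ)
  | n, 0 => if n = 0 then {[]} else ∅
  | n, 1 => if n = 0 then ∅ else {[n]}
  | n, m + 2 => (headPairs r n).biUnion fun p =>
      (pairedCompositions (n - p.1 - p.2) m).image (p.1 :: p.2 :: ·)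

variable {r}

theorem mem_pairedCompositions :
    ∀ {n m : ℕ} {l : List ℕ},
      l ∈ pairedCompositions r n m ↔ IsComposition n l ∧ PairsSatisfy r l ∧ l.length = m
  | n, 0, l | n, 1, l => by
    rw [pairedCompositions]
    rcases l with _ | ⟨x, _ | ⟨y, l⟩⟩ <;> split_ifs <;> simp [IsComposition] <;> omega
  | n, m + 2, l => by
    simp only [pairedCompositions, mem_biUnion, mem_image, mem_pairedCompositions]
    rcases l with _ | ⟨x, _ | ⟨y, l⟩⟩ <;> simp [headPairs, IsComposition]
    grind

theorem card_pairedCompositions_add_two (n m : ℕ) :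
    #(pairedCompositions r n (m + 2)) =
      ∑ p ∈ headPairs r n, #(pairedCompositions r (n - p.1 - p.2) m) := by
  rw [pairedCompositions, card_biUnion]
  · exact sum_congr rfl fun p _ => card_image_of_injective _ fun s t h => by simpa using h
  · intro p _ q _ hpq
    simp only [Function.onFun, disjoint_left, mem_image]
    rintro _ ⟨s, -, rfl⟩ ⟨t, -, h⟩
    simp only [List.cons.injEq] at h
    exact hpq (Prod.ext h.1.symm h.2.1.symm)

theorem headPairs_ne (n : ℕ) :
    headPairs (· ≠ ·) n =
      headPairs (fun x y => y < x) n ∪ (headPairs (fun x y => y < x) n).image Prod.swap := by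
  ext ⟨x, y⟩
  simp [headPairs]
  omega

theorem card_pairedCompositions_ne :
    ∀ n m : ℕ, #(pairedCompositions (· ≠ ·) n m) =
      2 ^ (m / 2) * #(pairedCompositions (fun x y => y < x) n m)
  | n, 0 | n, 1 => by simp [pairedCompositions]
  | n, m + 2 => by
    have disj : Disjoint (headPairs (fun x y => y < x) n)
        ((headPairs (fun x y => y < x) n).image Prod.swap) := by
      simp only [disjoint_left, mem_image, headPairs, mem_filter, not_exists, not_and]
      rintro ⟨x, y⟩ ⟨-, hxy, -⟩ ⟨x', y'⟩ ⟨-, hxy', -⟩ h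
      simp only [Prod.swap_prod_mk, Prod.mk.injEq] at h
      omega
    rw [card_pairedCompositions_add_two, card_pairedCompositions_add_two, headPairs_ne,
      sum_union disj, sum_image Prod.swap_injective.injOn]
    simp only [card_pairedCompositions_ne, Prod.fst_swap, Prod.snd_swap, Nat.sub_right_comm n]
    rw [← two_mul, Nat.add_div_right m two_pos, pow_succ, mul_sum, mul_sum]
    exact sum_congr rfl fun _ _ => by ring

end Counting

theorem antiPalParts_eq_card_pairedCompositions (n m : ℕ) :
    antiPalParts n m = #(pairedCompositions (· ≠ ·) n m) := by
  rw [antiPalParts, ← Set.ncard_preimage_of_injective_subset_range nest_injective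
    (by simp [nest_surjective.range_eq]), ← Set.ncard_coe_finset]
  congr 1
  ext l
  simp [mem_pairedCompositions, isComposition_nest_iff, isAntiPalindromic_nest_iff, length_nest]

theorem arndtParts_eq_card_pairedCompositions (n m : ℕ) :
    arndtParts n m = #(pairedCompositions (fun x y => y < x) n m) := by
  rw [arndtParts, ← Set.ncard_coe_finset]
  congr 1
  ext l
  simp [mem_pairedCompositions, isArndt_iff_pairsSatisfy]

/-- for all `n, m ≥ 0`, `ap(n,m) = 2^{⌊m/2⌋} · a(n,m)`; equivalently the number
of Arndt compositions of `n` with `m` parts equals the number of reduced anti-palindromic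
compositions of `n` with `m` parts. -/
theorem antiPalParts_eq_two_pow_mul_arndtParts (n m : ℕ) :
    antiPalParts n m = 2 ^ (m / 2) * arndtParts n m := by
  rw [antiPalParts_eq_card_pairedCompositions, arndtParts_eq_card_pairedCompositions,
    card_pairedCompositions_ne]
end
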